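/- If a bipartite state ρ_AB on ℂ^d ⊗ ℂ^d is k-extendible on B (i.e., there exists a state σ on A⊗B^{⊗k} invariant under permutations of the k copies of B with each single-copy marginal equal to ρ_AB), then its fidelity with the maximally entangled state satisfies ⟨Φ|ρ_AB|Φ⟩ ≤ (k + d − 1)/(dk). -/

import Mathlib

open Matrix BigOperators
open scoped ComplexOrder

/-- The maximally entangled unit vector `|Φ⟩ = (1/√d) Σ_i |ii⟩`. -/
noncomputable def mesVec (d : ℕ) : Fin d × Fin d → ℂ :=
  fun p => if p.1 = p.2 then (1 / (Real.sqrt d : ℂ)) else 0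

/-- Action of a permutation `π` of the `k` copies of `B ≅ ℂ^d` on an operator
on `A ⊗ B^{⊗k}`, where `B^{⊗k}` is indexed by functions `Fin k → Fin d`. -/
def permB {d k : ℕ} (π : Equiv.Perm (Fin k))
    (σ : Matrix (Fin d × (Fin k → Fin d)) (Fin d × (Fin k → Fin d)) ℂ) :
    Matrix (Fin d × (Fin k → Fin d)) (Fin d × (Fin k → Fin d)) ℂ :=
  Matrix.reindex
    ((Equiv.refl (Fin d)).prodCongr (π.arrowCongr (Equiv.refl (Fin d))))
    ((Equiv.refl (Fin d)).prodCongr (π.arrowCongr (Equiv.refl (Fin d)))) σ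

/-- Partial trace over all `B`-factors except the `j`-th one. -/
noncomputable def margB {d k : ℕ} (j : Fin k)
    (σ : Matrix (Fin d × (Fin k → Fin d)) (Fin d × (Fin k → Fin d)) ℂ) :
    Matrix (Fin d × Fin d) (Fin d × Fin d) ℂ :=
  Matrix.of fun p q =>
    ∑ g : Fin k → Fin d,
      if g j = p.2 then σ (p.1, g) (q.1, Function.update g j q.2) else 0

/-- A state `ρ_AB` is `k`-extendible on `B` if it has a permutation-invariant
extension to `A ⊗ B^{⊗k}` whose single-copy marginals all equal `ρ_AB`. -/
def KExtendible (d k : ℕ)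
    (ρ : Matrix (Fin d × Fin d) (Fin d × Fin d) ℂ) : Prop :=
  ∃ σ : Matrix (Fin d × (Fin k → Fin d)) (Fin d × (Fin k → Fin d)) ℂ,
    σ.PosSemidef ∧ σ.trace = 1 ∧
      (∀ π : Equiv.Perm (Fin k), permB π σ = σ) ∧
      (∀ j : Fin k, margB j σ = ρ)

/-!
Let `P_j` be the projection onto `Φ` in `A ⊗ B_j`, tensored with the identity on the other
copies of `B`. Each marginal condition says `Tr (σ P_j) = ⟨Φ|ρ|Φ⟩`, so
`k ⟨Φ|ρ|Φ⟩ = Tr (σ ∑ⱼ P_j)`, and it suffices to show the operator inequality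
`∑ⱼ P_j ≤ (1 + (k - 1)/d) • 1`. For `i ≠ j` one has `P_i P_j P_i = d⁻² P_i`, hence
`‖P_j P_i x‖ = ‖P_i x‖ / d` and `|⟪P_i x, P_j x⟫| ≤ ‖P_i x‖ ‖P_j x‖ / d`. With
`T = ∑ ‖P_j x‖² = re ⟪∑ P_j x, x⟫ ≤ ‖∑ P_j x‖ ‖x‖` and
`‖∑ P_j x‖² ≤ T + d⁻¹ ∑_{i ≠ j} ‖P_i x‖ ‖P_j x‖ ≤ (1 + (k - 1)/d) T`,
this gives `T ≤ (1 + (k - 1)/d) ‖x‖²`.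
-/

open scoped InnerProductSpace
open RCLike

section AlmostOrthogonal

variable {𝕜 E ι : Type*} [RCLike 𝕜] [NormedAddCommGroup E] [InnerProductSpace 𝕜 E] [Fintype ι]

lemma norm_sum_sq_le_of_re_inner_le {v : ι → E} {s : ℝ} (hs : 0 ≤ s)
    (hv : ∀ i j, i ≠ j → re ⟪v i, v j⟫_𝕜 ≤ s * (‖v i‖ * ‖v j‖)) :
    ‖∑ i, v i‖ ^ 2 ≤ (1 + (Fintype.card ι - 1) * s) * ∑ i, ‖v i‖ ^ 2 := by
  classical
  have hexpand : ‖∑ i, v i‖ ^ 2 = ∑ i, ∑ j, re ⟪v i, v j⟫_𝕜 := by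
    rw [← inner_self_eq_norm_sq (𝕜 := 𝕜), sum_inner, map_sum]
    simp only [inner_sum, map_sum]
  have hterm : ∀ i j, re ⟪v i, v j⟫_𝕜 ≤
      s * (‖v i‖ * ‖v j‖) + if i = j then (1 - s) * ‖v i‖ ^ 2 else 0 := by
    intro i j
    by_cases hij : i = j
    · subst hij
      rw [if_pos rfl, inner_self_eq_norm_sq]
      exact le_of_eq (by ring)
    · simpa [hij] using hv i j hij
  have hcs := sq_sum_le_card_mul_sum_sq (s := Finset.univ) (f := fun i => ‖v i‖)
  rw [Finset.card_univ] at hcs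
  calc ‖∑ i, v i‖ ^ 2
      ≤ ∑ i, ∑ j, (s * (‖v i‖ * ‖v j‖) + if i = j then (1 - s) * ‖v i‖ ^ 2 else 0) := by
        rw [hexpand]; gcongr with i _ j _; exact hterm i j
    _ = s * (∑ i, ‖v i‖) ^ 2 + (1 - s) * ∑ i, ‖v i‖ ^ 2 := by
        simp [Finset.sum_add_distrib, ← Finset.mul_sum, sq, Finset.sum_mul_sum]
    _ ≤ s * (Fintype.card ι * ∑ i, ‖v i‖ ^ 2) + (1 - s) * ∑ i, ‖v i‖ ^ 2 := by gcongr
    _ = (1 + (Fintype.card ι - 1) * s) * ∑ i, ‖v i‖ ^ 2 := by ring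

lemma sum_norm_sq_le_of_re_inner_le [Nonempty ι] {x : E} {v : ι → E} {s : ℝ} (hs : 0 ≤ s)
    (hx : ∀ i, re ⟪v i, x⟫_𝕜 = ‖v i‖ ^ 2)
    (hv : ∀ i j, i ≠ j → re ⟪v i, v j⟫_𝕜 ≤ s * (‖v i‖ * ‖v j‖)) :
    ∑ i, ‖v i‖ ^ 2 ≤ (1 + (Fintype.card ι - 1) * s) * ‖x‖ ^ 2 := by
  set T := ∑ i, ‖v i‖ ^ 2
  set c := 1 + ((Fintype.card ι : ℝ) - 1) * s
  have hc : 1 ≤ c := by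
    have : (1 : ℝ) ≤ Fintype.card ι := by exact_mod_cast Fintype.card_pos
    nlinarith
  have hT : T ≤ ‖∑ i, v i‖ * ‖x‖ := by
    calc T = re ⟪∑ i, v i, x⟫_𝕜 := by simp only [sum_inner, map_sum, hx, T]
      _ ≤ ‖∑ i, v i‖ * ‖x‖ := re_inner_le_norm _ _
  have hTT : T * T ≤ c * ‖x‖ ^ 2 * T := calc
    T * T ≤ ‖∑ i, v i‖ ^ 2 * ‖x‖ ^ 2 := by
      rw [← mul_pow, sq]; exact mul_self_le_mul_self (by positivity) hT
    _ ≤ c * T * ‖x‖ ^ 2 := by gcongr; exact norm_sum_sq_le_of_re_inner_le hs hv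
    _ = c * ‖x‖ ^ 2 * T := by ring
  rcases (show 0 ≤ T by positivity).eq_or_lt with hT0 | hT0
  · rw [← hT0]; exact mul_nonneg (zero_le_one.trans hc) (sq_nonneg _)
  · exact le_of_mul_le_mul_right hTT hT0

end AlmostOrthogonal

namespace LinearMap.IsSymmetricProjection

variable {𝕜 E : Type*} [RCLike 𝕜] [NormedAddCommGroup E] [InnerProductSpace 𝕜 E]
  {p q : E →ₗ[𝕜] E}

lemma inner_apply_left (hp : p.IsSymmetricProjection) (x y : E) :
    ⟪p x, y⟫_𝕜 = ⟪p x, p y⟫_𝕜 := by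
  conv_lhs => rw [← hp.isIdempotentElem.eq, Module.End.mul_apply]
  exact hp.isSymmetric _ _

lemma re_inner_apply_self (hp : p.IsSymmetricProjection) (x : E) :
    re ⟪p x, x⟫_𝕜 = ‖p x‖ ^ 2 := by
  rw [hp.inner_apply_left, inner_self_eq_norm_sq]

lemma norm_inner_apply_apply_le (hp : p.IsSymmetricProjection) (hq : q.IsSymmetricProjection)
    {s : ℝ} (hs : 0 ≤ s) (hpqp : p * q * p = ((s ^ 2 : ℝ) : 𝕜) • p) (x : E) :
    ‖⟪p x, q x⟫_𝕜‖ ≤ s * (‖p x‖ * ‖q x‖) := by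
  have hqp : ‖q (p x)‖ = s * ‖p x‖ := by
    have : ‖q (p x)‖ ^ 2 = (s * ‖p x‖) ^ 2 := by
      rw [← hq.re_inner_apply_self, hq.isSymmetric, hp.isSymmetric, ← Module.End.mul_apply,
        ← Module.End.mul_apply, hpqp, smul_apply, inner_smul_right, re_ofReal_mul, ← hp.isSymmetric,
        hp.re_inner_apply_self]
      ring
    exact (pow_left_inj₀ (norm_nonneg _) (by positivity) two_ne_zero).mp this
  calc ‖⟪p x, q x⟫_𝕜‖ = ‖⟪q (p x), q x⟫_𝕜‖ := by
        rw [hq.isSymmetric, ← Module.End.mul_apply q q, hq.isIdempotentElem.eq]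
    _ ≤ ‖q (p x)‖ * ‖q x‖ := norm_inner_le_norm _ _
    _ = s * (‖p x‖ * ‖q x‖) := by rw [hqp, mul_assoc]

theorem sum_le_of_mul_mul_eq {ι : Type*} [Fintype ι] [Nonempty ι] {p : ι → E →ₗ[𝕜] E}
    (hp : ∀ i, (p i).IsSymmetricProjection) {s : ℝ} (hs : 0 ≤ s)
    (hpqp : ∀ i j, i ≠ j → p i * p j * p i = ((s ^ 2 : ℝ) : 𝕜) • p i) :
    ∑ i, p i ≤ ((1 + (Fintype.card ι - 1) * s : ℝ) : 𝕜) • 1 := by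
  rw [LinearMap.le_def]
  refine ⟨(IsSymmetric.one.smul (conj_ofReal _)).sub
    (isSymmetric_sum _ fun i _ => (hp i).isSymmetric), fun x => ?_⟩
  have hbound := sum_norm_sq_le_of_re_inner_le (x := x) (v := fun i => p i x) hs
    (fun i => (hp i).re_inner_apply_self x)
    (fun i j hij => (re_le_norm _).trans
      ((hp i).norm_inner_apply_apply_le (hp j) hs (hpqp i j hij) x))
  simp only [sub_apply, smul_apply, Module.End.one_apply, sum_apply, inner_sub_left,
    inner_smul_left, sum_inner, map_sub, map_sum, conj_ofReal, re_ofReal_mul,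
    inner_self_eq_norm_sq, (hp _).re_inner_apply_self]
  linarith

end LinearMap.IsSymmetricProjection

open scoped MatrixOrder in
theorem Matrix.PosSemidef.trace_mul_nonneg {n 𝕜 : Type*} [Fintype n] [RCLike 𝕜]
    {A B : Matrix n n 𝕜} (hA : A.PosSemidef) (hB : B.PosSemidef) : 0 ≤ (A * B).trace := by
  classical
  obtain ⟨C, rfl⟩ := CStarAlgebra.nonneg_iff_eq_star_mul_self.mp hA.nonneg
  rw [star_eq_conjTranspose, Matrix.mul_assoc, trace_mul_comm]
  exact (hB.mul_mul_conjTranspose_same C).trace_nonneg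

open scoped MatrixOrder in
theorem Matrix.sum_le_of_isStarProjection {ι n 𝕜 : Type*} [Fintype ι] [Nonempty ι] [Fintype n]
    [DecidableEq n] [RCLike 𝕜] {P : ι → Matrix n n 𝕜} (hP : ∀ i, IsStarProjection (P i))
    {s : ℝ} (hs : 0 ≤ s) (hPP : ∀ i j, i ≠ j → P i * P j * P i = ((s ^ 2 : ℝ) : 𝕜) • P i) :
    ∑ i, P i ≤ ((1 + (Fintype.card ι - 1) * s : ℝ) : 𝕜) • 1 := by
  let f := Matrix.toLpLinAlgEquiv (R := 𝕜) (n := n) 2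
  rw [Matrix.le_iff, ← isPositive_toEuclideanLin_iff]
  have hle := LinearMap.IsSymmetricProjection.sum_le_of_mul_mul_eq (p := fun i => f (P i))
    (fun i => ⟨(hP i).isIdempotentElem.map f,
      isSymmetric_toEuclideanLin_iff.mpr (hP i).isSelfAdjoint⟩) hs
    (fun i j hij => by simp only [← map_mul, hPP i j hij, map_smul])
  rw [LinearMap.le_def] at hle
  convert hle using 1
  simp [f, map_sub, map_smul, map_sum, Module.End.one_eq_id]
  rfl

section MaximallyEntangledProjection

variable {d k : ℕ}

/-- `|Φ⟩⟨Φ|` on `A ⊗ B_j`, tensored with the identity on the other copies of `B`. -/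
noncomputable def mesProj (d k : ℕ) (j : Fin k) :
    Matrix (Fin d × (Fin k → Fin d)) (Fin d × (Fin k → Fin d)) ℂ :=
  Matrix.of fun p q => if p.1 = p.2 j ∧ q.1 = q.2 j ∧ ∀ l ≠ j, p.2 l = q.2 l then (d : ℂ)⁻¹ else 0

lemma mesProj_transpose (j : Fin k) : (mesProj d k j)ᵀ = mesProj d k j := by
  ext p q
  simp only [mesProj, transpose_apply, of_apply, eq_comm (a := p.2 _)]
  exact if_congr ⟨fun ⟨h₁, h₂, h₃⟩ => ⟨h₂, h₁, h₃⟩, fun ⟨h₁, h₂, h₃⟩ => ⟨h₂, h₁, h₃⟩⟩ rfl rfl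

lemma mesProj_isHermitian (j : Fin k) : (mesProj d k j).IsHermitian := by
  ext p q
  rw [conjTranspose_apply, ← transpose_apply (mesProj d k j), mesProj_transpose]
  simp only [mesProj, of_apply]
  split_ifs <;> simp

lemma mesProj_apply_update (j : Fin k) (c : Fin d) (f : Fin k → Fin d)
    (q : Fin d × (Fin k → Fin d)) :
    mesProj d k j (c, Function.update f j c) q = mesProj d k j (f j, f) q := by
  simp only [mesProj, of_apply, Function.update_self, true_and]
  refine if_congr (and_congr_right' (forall₂_congr fun l hl => ?_)) rfl rfl
  rw [Function.update_of_ne hl]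

lemma mesProj_mul_apply (j : Fin k)
    (M : Matrix (Fin d × (Fin k → Fin d)) (Fin d × (Fin k → Fin d)) ℂ)
    (a : Fin d) (f : Fin k → Fin d) (q : Fin d × (Fin k → Fin d)) :
    (mesProj d k j * M) (a, f) q
      = if a = f j then (d : ℂ)⁻¹ * ∑ c, M (c, Function.update f j c) q else 0 := by
  have hentry : ∀ c g, mesProj d k j (a, f) (c, g) =
      if a = f j then (if g = Function.update f j c then (d : ℂ)⁻¹ else 0) else 0 := by
    intro c g
    simp only [mesProj, of_apply, Function.eq_update_iff, ← ite_and]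
    exact if_congr (by grind) rfl rfl
  simp only [mul_apply, Fintype.sum_prod_type, hentry, ite_mul, zero_mul]
  split_ifs <;> simp [Finset.mul_sum]

lemma mesProj_apply_of_ne (j : Fin k) {a : Fin d} {f : Fin k → Fin d} (ha : a ≠ f j)
    (q : Fin d × (Fin k → Fin d)) : mesProj d k j (a, f) q = 0 :=
  if_neg fun h => ha h.1

lemma mul_mesProj_apply (j : Fin k)
    (M : Matrix (Fin d × (Fin k → Fin d)) (Fin d × (Fin k → Fin d)) ℂ)
    (p : Fin d × (Fin k → Fin d)) (b : Fin d) (g : Fin k → Fin d) :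
    (M * mesProj d k j) p (b, g)
      = if b = g j then (d : ℂ)⁻¹ * ∑ c, M p (c, Function.update g j c) else 0 := by
  rw [← transpose_apply (M * _), transpose_mul, mesProj_transpose, mesProj_mul_apply]
  rfl

lemma mesProj_mul_self (hd : 0 < d) (j : Fin k) :
    mesProj d k j * mesProj d k j = mesProj d k j := by
  ext ⟨a, f⟩ q
  rw [mesProj_mul_apply]
  simp only [mesProj_apply_update, Finset.sum_const, Finset.card_univ, Fintype.card_fin,
    nsmul_eq_mul]
  split_ifs with ha
  · subst ha
    field_simp
  · rw [mesProj_apply_of_ne j ha]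

lemma mesProj_mul_mesProj_mul_mesProj {i j : Fin k} (hij : i ≠ j) :
    mesProj d k i * mesProj d k j * mesProj d k i = ((d : ℂ) ^ 2)⁻¹ • mesProj d k i := by
  ext ⟨a, f⟩ q
  have hinner : ∀ e, mesProj d k i (e, Function.update (Function.update f i (f j)) j e) q =
      if e = f j then mesProj d k i (f i, f) q else 0 := by
    intro e
    split_ifs with he
    · have hupd : Function.update (Function.update f i (f j)) j (f j) =
          Function.update f i (f j) :=
        Function.update_eq_self_iff.mpr (Function.update_of_ne hij.symm _ _).symm
      rw [he, hupd, mesProj_apply_update]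
    · refine mesProj_apply_of_ne i ?_ q
      rwa [Function.update_of_ne hij, Function.update_self]
  rw [Matrix.mul_assoc, mesProj_mul_apply, Matrix.smul_apply]
  simp only [mesProj_mul_apply, Function.update_of_ne hij.symm,
    Finset.sum_ite_eq', Finset.mem_univ, if_true, hinner]
  split_ifs with ha
  · subst ha
    ring
  · rw [mesProj_apply_of_ne i ha, smul_zero]

lemma star_mesVec_dotProduct_mulVec (M : Matrix (Fin d × Fin d) (Fin d × Fin d) ℂ) :
    star (mesVec d) ⬝ᵥ M *ᵥ mesVec d = (d : ℂ)⁻¹ * ∑ a, ∑ b, M (a, a) (b, b) := by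
  have hnorm : star (1 / (Real.sqrt d : ℂ)) * (1 / (Real.sqrt d : ℂ)) = (d : ℂ)⁻¹ := by
    rw [Complex.star_def, map_div₀, map_one, Complex.conj_ofReal, div_mul_div_comm, one_mul,
      ← Complex.ofReal_mul, Real.mul_self_sqrt (Nat.cast_nonneg d), one_div, Complex.ofReal_natCast]
  have hleft : ∀ v : Fin d × Fin d → ℂ,
      star (mesVec d) ⬝ᵥ v = star (1 / (Real.sqrt d : ℂ)) * ∑ a, v (a, a) := by
    intro v
    simp [dotProduct, Fintype.sum_prod_type, mesVec, apply_ite star, Finset.mul_sum]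
  have hright : ∀ p, (M *ᵥ mesVec d) p = (1 / (Real.sqrt d : ℂ)) * ∑ b, M p (b, b) := by
    intro p
    simp [mulVec, dotProduct, Fintype.sum_prod_type, mesVec, Finset.mul_sum, mul_comm]
  simp only [hleft, hright, ← Finset.mul_sum, ← mul_assoc, hnorm]

lemma trace_mul_mesProj (j : Fin k)
    (σ : Matrix (Fin d × (Fin k → Fin d)) (Fin d × (Fin k → Fin d)) ℂ) :
    (σ * mesProj d k j).trace = star (mesVec d) ⬝ᵥ margB j σ *ᵥ mesVec d := by
  rw [star_mesVec_dotProduct_mulVec]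
  simp only [trace, diag_apply, Fintype.sum_prod_type, mul_mesProj_apply, margB, of_apply]
  conv_lhs => rw [Finset.sum_comm]
  conv_rhs => rw [Finset.sum_comm]; enter [2, 2, b]; rw [Finset.sum_comm]
  simp only [Finset.sum_ite_eq, Finset.sum_ite_eq', Finset.mem_univ, if_true, Finset.mul_sum]
  exact Finset.sum_comm

open scoped MatrixOrder in
theorem sum_mesProj_le (hd : 0 < d) (hk : 0 < k) :
    ∑ j, mesProj d k j ≤ (((k + d - 1) / d : ℝ) : ℂ) • 1 := by
  have : Nonempty (Fin k) := ⟨⟨0, hk⟩⟩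
  have hsum := Matrix.sum_le_of_isStarProjection (P := mesProj d k)
    (fun j => ⟨mesProj_mul_self hd j, mesProj_isHermitian j⟩) (s := (d : ℝ)⁻¹) (by positivity)
    (fun i j hij => by rw [mesProj_mul_mesProj_mul_mesProj hij]; push_cast; ring_nf)
  have hc : 1 + ((Fintype.card (Fin k) : ℝ) - 1) * (d : ℝ)⁻¹ = (k + d - 1) / d := by
    rw [Fintype.card_fin]
    field_simp
    ring
  rwa [hc] at hsum

end MaximallyEntangledProjection

theorem kExtendible_fidelity_le_general (d k : ℕ) (hd : 0 < d) (hk : 0 < k)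
    (ρ : Matrix (Fin d × Fin d) (Fin d × Fin d) ℂ)
    (hext : KExtendible d k ρ) :
    (star (mesVec d) ⬝ᵥ ρ.mulVec (mesVec d)).re ≤ (k + d - 1) / (d * k) := by
  obtain ⟨σ, hσ, hσtr, -, hmarg⟩ := hext
  have hsum : (σ * ∑ j, mesProj d k j).trace = k * (star (mesVec d) ⬝ᵥ ρ *ᵥ mesVec d) := by
    simp [Matrix.mul_sum, trace_sum, trace_mul_mesProj, hmarg]
  have hgap := hσ.trace_mul_nonneg (Matrix.le_iff.mp (sum_mesProj_le hd hk))
  rw [Matrix.mul_sub, trace_sub, hsum, Matrix.mul_smul, Matrix.mul_one, trace_smul, hσtr,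
    smul_eq_mul, mul_one, sub_nonneg] at hgap
  have hre := (Complex.le_def.mp hgap).1
  rw [← Complex.ofReal_natCast, Complex.re_ofReal_mul, Complex.ofReal_re] at hre
  rw [le_div_iff₀ (by positivity)]
  calc _ = k * (star (mesVec d) ⬝ᵥ ρ *ᵥ mesVec d).re * d := by ring
    _ ≤ k + d - 1 := (le_div_iff₀ (by positivity)).mp hre

/-- A `k`-extendible state has fidelity with the maximally entangled state at
most `(k + d − 1)/(dk)`. -/
theorem kExtendible_fidelity_le (d k : ℕ) (hd : 0 < d) (hk : 0 < k)
    (ρ : Matrix (Fin d × Fin d) (Fin d × Fin d) ℂ)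
    (hρ : ρ.PosSemidef) (hρtr : ρ.trace = 1)
    (hext : KExtendible d k ρ) :
    (star (mesVec d) ⬝ᵥ ρ.mulVec (mesVec d)).re ≤ (k + d - 1) / (d * k) :=
  kExtendible_fidelity_le_general d k hd hk ρ hext
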